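/- In the λα typing system, Γ ⊢ [B/x]∘A is derivable if and only if Γ ⊢ (λx.A)B is derivable. -/

import Mathlib

abbrev Var := ℕ
abbrev Ctx := Finset Var × List Var

/-- `Γ,x` : extend the local part with `x` as innermost (rightmost) variable.
Lists represent local contexts with head = outermost (leftmost). -/
def Ctx.snoc (Γ : Ctx) (x : Var) : Ctx := (Γ.1, Γ.2 ++ [x])

/-- The least partial order on contexts generated by
`(G,L) < (G ∪ {x}, L)` for `x ∉ G` and `(G,L) < (G \ {x}, x::L)`. -/
inductive CtxLe : Ctx → Ctx → Prop
  | refl (Γ : Ctx) : CtxLe Γ Γ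
  | trans {Γ Δ Θ : Ctx} : CtxLe Γ Δ → CtxLe Δ Θ → CtxLe Γ Θ
  | glob (G : Finset Var) (L : List Var) (x : Var) (h : x ∉ G) :
      CtxLe (G, L) (insert x G, L)
  | loc (G : Finset Var) (L : List Var) (x : Var) :
      CtxLe (G, L) (G.erase x, x :: L)

def Compatible (Γ Δ : Ctx) : Prop := ∃ Θ, CtxLe Γ Θ ∧ CtxLe Δ Θ

mutual
/-- Terms of the calculus λα. -/
inductive Tm : Type
  | var : Var → Tm
  | app : Tm → Tm → Tm
  | lam : Var → Tm → Tm
  | sub : Sb → Tm → Tm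
/-- Substitutions of the calculus λα: `[B/x]`, `Wx`, `{yx}`, `Sₓ`. -/
inductive Sb : Type
  | push : Tm → Var → Sb
  | weak : Var → Sb
  | ren : Var → Var → Sb
  | lift : Sb → Var → Sb
end

mutual
/-- The typing judgement `Γ ⊢ A` of λα (rules R1–R6). -/
inductive Judg : Ctx → Tm → Prop
  | r1 {G : Finset Var} {x : Var} (h : x ∈ G) : Judg (G, []) (.var x)
  | r2 (Γ : Ctx) (x : Var) : Judg (Γ.snoc x) (.var x)
  | r3 {Γ : Ctx} {x y : Var} (h : x ≠ y) : Judg Γ (.var x) → Judg (Γ.snoc y) (.var x)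
  | r4 {Γ A B} : Judg Γ A → Judg Γ B → Judg Γ (.app A B)
  | r5 {Γ x A} : Judg (Ctx.snoc Γ x) A → Judg Γ (.lam x A)
  | r6 {Γ Δ S A} : SJudg Γ S Δ → Judg Δ A → Judg Γ (.sub S A)
/-- The judgement `Γ ⊢ S ▷ Δ` of λα (rules R7–R10). -/
inductive SJudg : Ctx → Sb → Ctx → Prop
  | r7 {Γ B x} : Judg Γ B → SJudg Γ (.push B x) (Γ.snoc x)
  | r8 (Γ x) : SJudg (Ctx.snoc Γ x) (.weak x) Γ
  | r9 (Γ y x) : SJudg (Ctx.snoc Γ y) (.ren y x) (Ctx.snoc Γ x)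
  | r10 {Γ Δ S} (x) : SJudg Γ S Δ → SJudg (Ctx.snoc Γ x) (.lift S x) (Ctx.snoc Δ x)
end

theorem Judg.app_iff {Γ : Ctx} {A B : Tm} : Judg Γ (.app A B) ↔ Judg Γ A ∧ Judg Γ B :=
  ⟨fun | .r4 hA hB => ⟨hA, hB⟩, fun ⟨hA, hB⟩ => .r4 hA hB⟩

theorem Judg.lam_iff {Γ : Ctx} {x : Var} {A : Tm} : Judg Γ (.lam x A) ↔ Judg (Γ.snoc x) A :=
  ⟨fun | .r5 hA => hA, .r5⟩

theorem Judg.sub_iff {Γ : Ctx} {S : Sb} {A : Tm} :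
    Judg Γ (.sub S A) ↔ ∃ Δ, SJudg Γ S Δ ∧ Judg Δ A :=
  ⟨fun | .r6 hS hA => ⟨_, hS, hA⟩, fun ⟨_, hS, hA⟩ => .r6 hS hA⟩

theorem SJudg.push_iff {Γ Δ : Ctx} {B : Tm} {x : Var} :
    SJudg Γ (.push B x) Δ ↔ Judg Γ B ∧ Δ = Γ.snoc x :=
  ⟨fun | .r7 hB => ⟨hB, rfl⟩, fun ⟨hB, hΔ⟩ => hΔ ▸ .r7 hB⟩

/-- `Γ ⊢ [B/x]∘A` is derivable iff `Γ ⊢ (λx.A)B` is derivable. -/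
theorem judg_push_iff (Γ : Ctx) (B : Tm) (x : Var) (A : Tm) :
    Judg Γ (.sub (.push B x) A) ↔ Judg Γ (.app (.lam x A) B) := by
  simp only [Judg.sub_iff, SJudg.push_iff, Judg.app_iff, Judg.lam_iff]
  constructor
  · rintro ⟨_, ⟨hB, rfl⟩, hA⟩
    exact ⟨hA, hB⟩
  · rintro ⟨hA, hB⟩
    exact ⟨_, ⟨hB, rfl⟩, hA⟩
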